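/- arXiv:2603.13090 — 2 statements merged into one kernel-verified Lean document; each statement's English description precedes it below -/
import Mathlib

section
/- Let d ≥ 1 and T > 0. Let ρ : ℝ → Matrix (Fin d) (Fin d) ℂ be differentiable with ρ'(t) = L_t(ρ(t)) for all t ∈ [0,T], where L_t is a family of linear superoperators, set ρ₀ = ρ(0), and suppose ‖ρ(t)‖₁ = 1 for all t ∈ [0,T] (as holds for density matrices). Let H̃ : ℝ → Matrix (Fin d) (Fin d) ℂ be a continuous family of Hermitian matrices, define L̃_t(A) = −i(H̃(t)·A − A·H̃(t)), and let U : ℝ → Matrix (Fin d) (Fin d) ℂ be differentiable with U(0) = 1, U'(t) = −i·H̃(t)·U(t), and suppose U(t) is unitary with U(t)·ρ₀·U(t)ᴴ = ρ₀ for all t ∈ [0,T]. If C ≥ 0 is a constant satisfying ‖L_t(A) − L̃_t(A)‖₁ ≤ C·‖A‖₁ for all t ∈ [0,T] and all matrices A, then T ≥ ‖ρ(T) − ρ₀‖₁ / C whenever C > 0; equivalently ‖ρ(T) − ρ₀‖₁ ≤ C·T. -/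
open Matrix
open scoped ComplexOrder

/- Matrices are equipped with the Frobenius norm so that curves of matrices can be
differentiated; the statement itself is phrased via the trace norm defined below. -/
attribute [local instance] Matrix.frobeniusNormedAddCommGroup Matrix.frobeniusNormedSpace

/-- Trace norm (Schatten 1-norm): `‖A‖₁ = Tr √(Aᴴ A)`. -/
noncomputable def traceNorm {d : ℕ} (A : Matrix (Fin d) (Fin d) ℂ) : ℝ :=
  ((((Matrix.posSemidef_conjTranspose_mul_self A).1.eigenvectorUnitary :
      Matrix (Fin d) (Fin d) ℂ) *
    diagonal (((↑) : ℝ → ℂ) ∘ (√·) ∘ (Matrix.posSemidef_conjTranspose_mul_self A).1.eigenvalues) *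
    (star (Matrix.posSemidef_conjTranspose_mul_self A).1.eigenvectorUnitary :
      Matrix (Fin d) (Fin d) ℂ)).trace).re

/-! The trace norm is dual to unitaries: `Re Tr (W A) ≤ ‖A‖₁` for every unitary `W`, with
equality for the adjoint of the polar factor of `A`. In the interaction picture
`σ(t) = U(t)ᴴ ρ(t) U(t)` the commutator generator `L̃_t` cancels, so
`σ'(t) = U(t)ᴴ (L_t − L̃_t)(ρ(t)) U(t)` has trace norm at most `C ‖ρ(t)‖₁ = C`. Pairing `σ` with
the unitary that realises `‖σ(T) − σ(0)‖₁` reduces the estimate to the real mean value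
inequality. Finally `U(T)` fixes `ρ₀`, so `ρ(T) − ρ₀ = U(T) (σ(T) − σ(0)) U(T)ᴴ`, whose trace
norm is at most that of `σ(T) − σ(0)`. -/

open scoped InnerProductSpace

theorem exists_orthonormalBasis_inner_eq_norm {𝕜 E ι : Type*} [RCLike 𝕜] [NormedAddCommGroup E]
    [InnerProductSpace 𝕜 E] [FiniteDimensional 𝕜 E] [Fintype ι]
    (hcard : Module.finrank 𝕜 E = Fintype.card ι)
    {y : ι → E} (hy : Pairwise fun i j => ⟪y i, y j⟫_𝕜 = 0) :
    ∃ b : OrthonormalBasis ι 𝕜 E, ∀ i, ⟪b i, y i⟫_𝕜 = ‖y i‖ := by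
  set v : ι → E := fun i => (‖y i‖⁻¹ : 𝕜) • y i
  have hv : Orthonormal 𝕜 ({i | y i ≠ 0}.domRestrict v) :=
    ⟨fun i => norm_smul_inv_norm i.2, fun i j hij => by
      change ⟪v i, v j⟫_𝕜 = 0
      simp [v, inner_smul_left, inner_smul_right, hy (Subtype.coe_ne_coe.mpr hij)]⟩
  obtain ⟨b, hb⟩ := hv.exists_orthonormalBasis_extension_of_card_eq hcard
  refine ⟨b, fun i => ?_⟩
  by_cases hi : y i = 0
  · simp [hi]
  · have hy0 : (‖y i‖ : 𝕜) ≠ 0 := by simpa using hi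
    rw [hb i hi, inner_smul_left, inner_self_eq_norm_sq_to_K, map_inv₀, RCLike.conj_ofReal, sq,
      ← mul_assoc, inv_mul_cancel₀ hy0, one_mul]

namespace Matrix

variable {𝕜 n : Type*} [RCLike 𝕜] [Fintype n] [DecidableEq n]

theorem norm_col_of_mem_unitaryGroup {U : Matrix n n 𝕜} (hU : U ∈ unitaryGroup n 𝕜) (j : n) :
    ‖WithLp.toLp 2 (Uᵀ j)‖ = 1 := by
  have h : ⟪WithLp.toLp 2 (Uᵀ j), WithLp.toLp 2 (Uᵀ j)⟫_𝕜 = 1 := by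
    rw [inner_matrix_col_col, ← star_eq_conjTranspose, mem_unitaryGroup_iff'.mp hU, one_apply_eq]
  rw [inner_self_eq_norm_sq_to_K] at h
  exact (pow_eq_one_iff_of_nonneg (norm_nonneg _) two_ne_zero).mp (by exact_mod_cast h)

theorem re_trace_mul_le_sum_norm_col {Z : Matrix n n 𝕜} (hZ : Z ∈ unitaryGroup n 𝕜)
    (Y : Matrix n n 𝕜) : RCLike.re (Z * Y).trace ≤ ∑ j, ‖WithLp.toLp 2 (Yᵀ j)‖ := by
  have hZ' : Zᴴ ∈ unitaryGroup n 𝕜 := by simpa [star_eq_conjTranspose] using Unitary.star_mem hZ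
  rw [trace, map_sum]
  refine Finset.sum_le_sum fun j _ => ?_
  calc RCLike.re ((Z * Y) j j)
      = RCLike.re ⟪WithLp.toLp 2 (Zᴴᵀ j), WithLp.toLp 2 (Yᵀ j)⟫_𝕜 := by
        rw [inner_matrix_col_col, conjTranspose_conjTranspose]
    _ ≤ ‖WithLp.toLp 2 (Zᴴᵀ j)‖ * ‖WithLp.toLp 2 (Yᵀ j)‖ := re_inner_le_norm _ _
    _ = ‖WithLp.toLp 2 (Yᵀ j)‖ := by rw [norm_col_of_mem_unitaryGroup hZ', one_mul]

theorem exists_mem_unitaryGroup_trace_mul_eq_sum_norm_col (Y : Matrix n n 𝕜)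
    (hY : Pairwise fun i j => (Yᴴ * Y) i j = 0) :
    ∃ B ∈ unitaryGroup n 𝕜, (Bᴴ * Y).trace = ∑ j, (‖WithLp.toLp 2 (Yᵀ j)‖ : 𝕜) := by
  obtain ⟨b, hb⟩ := exists_orthonormalBasis_inner_eq_norm (𝕜 := 𝕜) (by simp)
    (y := fun j => WithLp.toLp 2 (Yᵀ j)) fun i j hij => by
      simp only [inner_matrix_col_col, hY hij]
  refine ⟨(EuclideanSpace.basisFun n 𝕜).toBasis.toMatrix b.toBasis,
    (EuclideanSpace.basisFun n 𝕜).toMatrix_orthonormalBasis_mem_unitary b, ?_⟩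
  refine Finset.sum_congr rfl fun j _ => ?_
  rw [diag_apply, ← inner_matrix_col_col, ← hb j]
  rfl

end Matrix

section TraceNorm

variable {d : ℕ}

noncomputable abbrev rightSingularVectors (A : Matrix (Fin d) (Fin d) ℂ) :
    Matrix (Fin d) (Fin d) ℂ :=
  (posSemidef_conjTranspose_mul_self A).1.eigenvectorUnitary

theorem rightSingularVectors_mem_unitaryGroup (A : Matrix (Fin d) (Fin d) ℂ) :
    rightSingularVectors A ∈ unitaryGroup (Fin d) ℂ :=
  (posSemidef_conjTranspose_mul_self A).1.eigenvectorUnitary.2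

theorem conjTranspose_mul_self_mul_rightSingularVectors (A : Matrix (Fin d) (Fin d) ℂ) :
    (A * rightSingularVectors A)ᴴ * (A * rightSingularVectors A) =
      diagonal (((↑) : ℝ → ℂ) ∘ (posSemidef_conjTranspose_mul_self A).1.eigenvalues) := by
  have h := (posSemidef_conjTranspose_mul_self A).1.conjStarAlgAut_star_eigenvectorUnitary
  rw [Unitary.conjStarAlgAut_star_apply] at h
  simp only [conjTranspose_mul, star_eq_conjTranspose, Matrix.mul_assoc] at h ⊢
  exact h

theorem traceNorm_eq_sum_norm_col (A : Matrix (Fin d) (Fin d) ℂ) :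
    traceNorm A = ∑ j, ‖WithLp.toLp 2 ((A * rightSingularVectors A)ᵀ j)‖ := by
  rw [traceNorm, trace_mul_cycle, Unitary.coe_star_mul_self, one_mul, trace_diagonal,
    Complex.re_sum]
  refine Finset.sum_congr rfl fun j _ => ?_
  have h := inner_self_eq_norm_sq_to_K (𝕜 := ℂ) (WithLp.toLp 2 ((A * rightSingularVectors A)ᵀ j))
  rw [inner_matrix_col_col, conjTranspose_mul_self_mul_rightSingularVectors,
    diagonal_apply_eq, Function.comp_apply] at h
  have h' : (posSemidef_conjTranspose_mul_self A).1.eigenvalues j =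
      ‖WithLp.toLp 2 ((A * rightSingularVectors A)ᵀ j)‖ ^ 2 := by
    rw [← RCLike.ofReal_pow] at h
    exact RCLike.ofReal_injective h
  simp [h']

theorem re_trace_mul_le_traceNorm {W : Matrix (Fin d) (Fin d) ℂ}
    (hW : W ∈ unitaryGroup (Fin d) ℂ) (A : Matrix (Fin d) (Fin d) ℂ) :
    (W * A).trace.re ≤ traceNorm A := by
  set V := rightSingularVectors A
  have hV := rightSingularVectors_mem_unitaryGroup A
  have hZ : Vᴴ * W ∈ unitaryGroup (Fin d) ℂ := by
    simpa only [star_eq_conjTranspose] using mul_mem (Unitary.star_mem hV) hW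
  calc (W * A).trace.re = (Vᴴ * W * (A * V)).trace.re := by
        rw [trace_mul_comm (Vᴴ * W), Matrix.mul_assoc, ← Matrix.mul_assoc V,
          ← star_eq_conjTranspose, Unitary.mul_star_self_of_mem hV, Matrix.one_mul,
          trace_mul_comm]
    _ ≤ traceNorm A := by
        rw [traceNorm_eq_sum_norm_col]
        exact re_trace_mul_le_sum_norm_col hZ _

theorem exists_mem_unitaryGroup_re_trace_mul_eq_traceNorm (A : Matrix (Fin d) (Fin d) ℂ) :
    ∃ W ∈ unitaryGroup (Fin d) ℂ, (W * A).trace.re = traceNorm A := by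
  obtain ⟨B, hB, htr⟩ := exists_mem_unitaryGroup_trace_mul_eq_sum_norm_col
    (A * rightSingularVectors A) fun i j hij => by
      dsimp only
      rw [conjTranspose_mul_self_mul_rightSingularVectors, diagonal_apply_ne _ hij]
  refine ⟨rightSingularVectors A * Bᴴ, ?_, ?_⟩
  · simpa only [star_eq_conjTranspose] using
      mul_mem (rightSingularVectors_mem_unitaryGroup A) (Unitary.star_mem hB)
  · rw [traceNorm_eq_sum_norm_col, Matrix.mul_assoc, trace_mul_comm, Matrix.mul_assoc, htr,
      Complex.re_sum]
    simp

theorem abs_re_trace_mul_le_traceNorm {W : Matrix (Fin d) (Fin d) ℂ}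
    (hW : W ∈ unitaryGroup (Fin d) ℂ) (A : Matrix (Fin d) (Fin d) ℂ) :
    |(W * A).trace.re| ≤ traceNorm A := by
  have hneg : -W ∈ unitaryGroup (Fin d) ℂ := (-(⟨W, hW⟩ : unitaryGroup (Fin d) ℂ)).2
  refine abs_le.mpr ⟨?_, re_trace_mul_le_traceNorm hW A⟩
  have h := re_trace_mul_le_traceNorm hneg A
  rw [Matrix.neg_mul, trace_neg, Complex.neg_re] at h
  linarith

theorem traceNorm_mul_mul_conjTranspose_le {U : Matrix (Fin d) (Fin d) ℂ}
    (hU : U ∈ unitaryGroup (Fin d) ℂ) (A : Matrix (Fin d) (Fin d) ℂ) :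
    traceNorm (U * A * Uᴴ) ≤ traceNorm A := by
  obtain ⟨W, hW, hWA⟩ := exists_mem_unitaryGroup_re_trace_mul_eq_traceNorm (U * A * Uᴴ)
  have hW' : Uᴴ * W * U ∈ unitaryGroup (Fin d) ℂ := by
    simpa only [star_eq_conjTranspose] using mul_mem (mul_mem (Unitary.star_mem hU) hW) hU
  calc traceNorm (U * A * Uᴴ) = (Uᴴ * W * U * A).trace.re := by
        rw [← hWA]
        simp only [Matrix.mul_assoc]
        rw [trace_mul_comm Uᴴ]
        simp only [Matrix.mul_assoc]
    _ ≤ traceNorm A := re_trace_mul_le_traceNorm hW' A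

end TraceNorm

theorem traceNorm_sub_le_of_hasDerivWithinAt {d : ℕ} {σ σ' : ℝ → Matrix (Fin d) (Fin d) ℂ}
    {a b C : ℝ} (hab : a ≤ b) (hσ : ∀ t ∈ Set.Icc a b, HasDerivWithinAt σ (σ' t) (Set.Icc a b) t)
    (hσ' : ∀ t ∈ Set.Ico a b, traceNorm (σ' t) ≤ C) :
    traceNorm (σ b - σ a) ≤ C * (b - a) := by
  obtain ⟨W, hW, hWσ⟩ := exists_mem_unitaryGroup_re_trace_mul_eq_traceNorm (σ b - σ a)
  let φ : Matrix (Fin d) (Fin d) ℂ →L[ℝ] ℝ := LinearMap.toContinuousLinearMap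
    (Complex.reLm ∘ₗ traceLinearMap (Fin d) ℝ ℂ ∘ₗ LinearMap.mulLeft ℝ W)
  have hφ : ∀ A, φ A = (W * A).trace.re := fun A => rfl
  have hmvt := norm_image_sub_le_of_norm_deriv_le_segment' (f := fun t => φ (σ t))
    (fun t ht => φ.hasFDerivAt.comp_hasDerivWithinAt t (hσ t ht))
    (fun t ht => (abs_re_trace_mul_le_traceNorm hW (σ' t)).trans (hσ' t ht)) b ⟨hab, le_rfl⟩
  rw [← map_sub, hφ, hWσ, Real.norm_eq_abs] at hmvt
  exact (le_abs_self _).trans hmvt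

attribute [local instance] Matrix.frobeniusNormedRing Matrix.frobeniusNormedAlgebra

theorem hasDerivAt_conjTranspose_mul_mul {n : Type*} [Fintype n] [DecidableEq n]
    {U ρ : ℝ → Matrix n n ℂ} {H ρ' : Matrix n n ℂ} {t : ℝ} (hH : H.IsHermitian)
    (hU : HasDerivAt U ((-Complex.I) • (H * U t)) t) (hρ : HasDerivAt ρ ρ' t) :
    HasDerivAt (fun s => (U s)ᴴ * ρ s * U s)
      ((U t)ᴴ * (ρ' - (-Complex.I) • (H * ρ t - ρ t * H)) * U t) t := by
  refine ((hU.star.mul hρ).mul hU).congr_deriv ?_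
  simp only [Pi.mul_apply, star_eq_conjTranspose, neg_smul, conjTranspose_neg, conjTranspose_smul,
    conjTranspose_mul, hH.eq, RCLike.star_def, Complex.conj_I, Matrix.add_mul, Matrix.mul_sub,
    Matrix.sub_mul, Matrix.neg_mul, Matrix.mul_neg, smul_mul_assoc, mul_smul_comm, smul_sub,
    neg_neg, Matrix.mul_assoc]
  module

theorem general_speed_limit_general (d : ℕ) (T : ℝ) (hT : 0 < T)
    (L : ℝ → (Matrix (Fin d) (Fin d) ℂ →ₗ[ℂ] Matrix (Fin d) (Fin d) ℂ))
    (ρ : ℝ → Matrix (Fin d) (Fin d) ℂ)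
    (hρ : ∀ t ∈ Set.Icc (0 : ℝ) T, HasDerivAt ρ (L t (ρ t)) t)
    (hρnorm : ∀ t ∈ Set.Icc (0 : ℝ) T, traceNorm (ρ t) = 1)
    (Htil : ℝ → Matrix (Fin d) (Fin d) ℂ)
    (hHherm : ∀ t, (Htil t).IsHermitian)
    (U : ℝ → Matrix (Fin d) (Fin d) ℂ) (hU0 : U 0 = 1)
    (hU : ∀ t ∈ Set.Icc (0 : ℝ) T, HasDerivAt U ((-Complex.I) • (Htil t * U t)) t)
    (hUunitary : ∀ t ∈ Set.Icc (0 : ℝ) T, U t ∈ Matrix.unitaryGroup (Fin d) ℂ)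
    (hUfix : ∀ t ∈ Set.Icc (0 : ℝ) T, U t * ρ 0 * (U t)ᴴ = ρ 0)
    (C : ℝ)
    (hCbound : ∀ t ∈ Set.Icc (0 : ℝ) T, ∀ A : Matrix (Fin d) (Fin d) ℂ,
      traceNorm (L t A - (-Complex.I) • (Htil t * A - A * Htil t)) ≤ C * traceNorm A) :
    traceNorm (ρ T - ρ 0) ≤ C * T ∧ (0 < C → traceNorm (ρ T - ρ 0) / C ≤ T) := by
  have hTT : T ∈ Set.Icc 0 T := ⟨hT.le, le_rfl⟩
  set σ := fun t => (U t)ᴴ * ρ t * U t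
  have hσ' : ∀ t ∈ Set.Icc 0 T, traceNorm ((U t)ᴴ *
      (L t (ρ t) - (-Complex.I) • (Htil t * ρ t - ρ t * Htil t)) * U t) ≤ C := fun t ht =>
    calc _ ≤ traceNorm (L t (ρ t) - (-Complex.I) • (Htil t * ρ t - ρ t * Htil t)) := by
          simpa only [star_eq_conjTranspose, conjTranspose_conjTranspose] using
            traceNorm_mul_mul_conjTranspose_le (Unitary.star_mem (hUunitary t ht)) _
      _ ≤ C := by simpa [hρnorm t ht] using hCbound t ht (ρ t)
  have hdiff : ρ T - ρ 0 = U T * (σ T - σ 0) * (U T)ᴴ := by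
    have hUU : U T * (U T)ᴴ = 1 := by
      simpa only [star_eq_conjTranspose] using Unitary.mul_star_self_of_mem (hUunitary T hTT)
    simp only [σ, hU0, conjTranspose_one, Matrix.one_mul, Matrix.mul_one, Matrix.mul_sub,
      Matrix.sub_mul, hUfix T hTT, ← Matrix.mul_assoc, hUU]
    rw [Matrix.mul_assoc, hUU, Matrix.mul_one]
  have hbound : traceNorm (ρ T - ρ 0) ≤ C * T := calc
    traceNorm (ρ T - ρ 0) ≤ traceNorm (σ T - σ 0) := by
      rw [hdiff]; exact traceNorm_mul_mul_conjTranspose_le (hUunitary T hTT) _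
    _ ≤ C * (T - 0) := traceNorm_sub_le_of_hasDerivWithinAt hT.le
        (fun t ht => (hasDerivAt_conjTranspose_mul_mul (hHherm t) (hU t ht)
          (hρ t ht)).hasDerivWithinAt)
        (fun t ht => hσ' t (Set.Ico_subset_Icc_self ht))
    _ = C * T := by rw [sub_zero]
  exact ⟨hbound, fun hC => (div_le_iff₀ hC).mpr (by linarith)⟩

/-- general speed limit for controlled open quantum systems, Eq. (8).
If `ρ` solves `ρ' = L_t ρ` on `[0,T]` with `‖ρ(t)‖₁ = 1`, `H̃` is a continuous family of
Hermitian matrices with commutator generator `L̃_t(A) = −i(H̃(t)A − AH̃(t))`, `U` solves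
`U' = −iH̃U`, `U(0) = 1`, with `U(t)` unitary fixing `ρ₀ = ρ(0)` on `[0,T]`, and
`C ≥ 0` satisfies `‖L_t(A) − L̃_t(A)‖₁ ≤ C‖A‖₁` for all `t ∈ [0,T]` and all `A`, then
`‖ρ(T) − ρ₀‖₁ ≤ C·T`; equivalently, `T ≥ ‖ρ(T) − ρ₀‖₁ / C` whenever `C > 0`. -/
theorem general_speed_limit (d : ℕ) (hd : 1 ≤ d) (T : ℝ) (hT : 0 < T)
    (L : ℝ → (Matrix (Fin d) (Fin d) ℂ →ₗ[ℂ] Matrix (Fin d) (Fin d) ℂ))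
    (ρ : ℝ → Matrix (Fin d) (Fin d) ℂ)
    (hρ : ∀ t ∈ Set.Icc (0 : ℝ) T, HasDerivAt ρ (L t (ρ t)) t)
    (hρnorm : ∀ t ∈ Set.Icc (0 : ℝ) T, traceNorm (ρ t) = 1)
    (Htil : ℝ → Matrix (Fin d) (Fin d) ℂ)
    (hHcont : Continuous Htil) (hHherm : ∀ t, (Htil t).IsHermitian)
    (U : ℝ → Matrix (Fin d) (Fin d) ℂ) (hU0 : U 0 = 1)
    (hU : ∀ t ∈ Set.Icc (0 : ℝ) T, HasDerivAt U ((-Complex.I) • (Htil t * U t)) t)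
    (hUunitary : ∀ t ∈ Set.Icc (0 : ℝ) T, U t ∈ Matrix.unitaryGroup (Fin d) ℂ)
    (hUfix : ∀ t ∈ Set.Icc (0 : ℝ) T, U t * ρ 0 * (U t)ᴴ = ρ 0)
    (C : ℝ) (hC : 0 ≤ C)
    (hCbound : ∀ t ∈ Set.Icc (0 : ℝ) T, ∀ A : Matrix (Fin d) (Fin d) ℂ,
      traceNorm (L t A - (-Complex.I) • (Htil t * A - A * Htil t)) ≤ C * traceNorm A) :
    traceNorm (ρ T - ρ 0) ≤ C * T ∧ (0 < C → traceNorm (ρ T - ρ 0) / C ≤ T) :=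
  general_speed_limit_general d T hT L ρ hρ hρnorm Htil hHherm U hU0 hU hUunitary hUfix C hCbound
end

section
/- Let H₀ be a Hermitian d×d complex matrix with largest eigenvalue E_max and smallest eigenvalue E_min, and define the commutator superoperator L(A) = −i·(H₀·A − A·H₀) on d×d complex matrices. Then the operator norm of L with respect to the Frobenius norm equals the spectral diameter of H₀: sup over A ≠ 0 of ‖L(A)‖₂ / ‖A‖₂ = E_max − E_min, where ‖A‖₂ = √(Tr(AᴴA)). -/
open Matrix
open scoped ComplexOrder

/-- Frobenius (Hilbert–Schmidt) norm: `‖A‖₂ = √(Tr (Aᴴ A))`. -/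
noncomputable def frobNorm {d : ℕ} (A : Matrix (Fin d) (Fin d) ℂ) : ℝ :=
  Real.sqrt ((Aᴴ * A).trace.re)

/-!
Conjugation by the unitary of eigenvectors of `H₀` preserves the Frobenius norm and turns `H₀`
into `D = diagonal λ`. On `D` the commutator acts entrywise, `(D B - B D)ᵢⱼ = (λᵢ - λⱼ) Bᵢⱼ`, so
it stretches the Frobenius norm by at most `maxᵢⱼ |λᵢ - λⱼ| = E_max - E_min`, with equality at
the matrix unit `Eᵢⱼ` for `λᵢ = E_max`, `λⱼ = E_min`.
-/

open Unitary
open scoped Matrix.Norms.Frobenius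

namespace Matrix

variable {m n α 𝕜 : Type*} [Fintype m] [Fintype n]

theorem frobenius_norm_sq_eq_sum [SeminormedAddCommGroup α] (A : Matrix m n α) :
    ‖A‖ ^ 2 = ∑ i, ∑ j, ‖A i j‖ ^ 2 := by
  rw [frobenius_norm_def, ← Real.sqrt_eq_rpow, Real.sq_sqrt (by positivity)]
  simp_rw [Real.rpow_two]

theorem frobenius_norm_le_of_forall_norm_apply_le [SeminormedAddCommGroup α]
    {A B : Matrix m n α} {c : ℝ} (hc : 0 ≤ c) (h : ∀ i j, ‖A i j‖ ≤ c * ‖B i j‖) :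
    ‖A‖ ≤ c * ‖B‖ := by
  refine le_of_sq_le_sq ?_ (by positivity)
  rw [mul_pow, frobenius_norm_sq_eq_sum, frobenius_norm_sq_eq_sum, Finset.mul_sum]
  gcongr with i _ j
  simp_rw [Finset.mul_sum, ← mul_pow]
  gcongr with j
  exact h i j

theorem frobenius_norm_sq_eq_re_trace [RCLike 𝕜] (A : Matrix m n 𝕜) :
    ‖A‖ ^ 2 = RCLike.re (Aᴴ * A).trace := by
  rw [frobenius_norm_sq_eq_sum, trace, Finset.sum_comm]
  simp only [diag_apply, mul_apply, conjTranspose_apply, RCLike.star_def, RCLike.conj_mul,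
    map_sum]
  norm_cast

variable [DecidableEq n]

theorem trace_conjStarAlgAut {R : Type*} [CommRing R] [StarRing R] (u : unitaryGroup n R)
    (A : Matrix n n R) : (conjStarAlgAut R _ u A).trace = A.trace := by
  rw [conjStarAlgAut_apply, trace_mul_cycle, coe_star_mul_self, one_mul]

theorem frobenius_norm_conjStarAlgAut [RCLike 𝕜] (u : unitaryGroup n 𝕜) (A : Matrix n n 𝕜) :
    ‖conjStarAlgAut 𝕜 _ u A‖ = ‖A‖ := by
  have hgram : (conjStarAlgAut 𝕜 _ u A)ᴴ * conjStarAlgAut 𝕜 _ u A =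
      conjStarAlgAut 𝕜 _ u (Aᴴ * A) := by
    rw [map_mul, ← star_eq_conjTranspose, ← map_star, star_eq_conjTranspose]
  refine (sq_eq_sq₀ (norm_nonneg _) (norm_nonneg _)).1 ?_
  rw [frobenius_norm_sq_eq_re_trace, frobenius_norm_sq_eq_re_trace, hgram, trace_conjStarAlgAut]

theorem diagonal_mul_sub_mul_diagonal_apply {R : Type*} [CommRing R] (v : n → R)
    (B : Matrix n n R) (i j : n) :
    (diagonal v * B - B * diagonal v) i j = (v i - v j) * B i j := by
  rw [sub_apply, diagonal_mul, mul_diagonal]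
  ring

theorem diagonal_mul_sub_mul_diagonal_single {R : Type*} [CommRing R] (v : n → R) (i j : n) :
    diagonal v * single i j 1 - single i j 1 * diagonal v = (v i - v j) • single i j 1 := by
  ext k l
  rw [diagonal_mul_sub_mul_diagonal_apply, smul_apply, smul_eq_mul, single_apply]
  split_ifs with h
  · rw [h.1, h.2]
  · simp

theorem frobenius_norm_diagonal_mul_sub_mul_diagonal_le [NormedField 𝕜] (v : n → 𝕜) {c : ℝ}
    (hc : 0 ≤ c) (hv : ∀ i j, ‖v i - v j‖ ≤ c) (B : Matrix n n 𝕜) :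
    ‖diagonal v * B - B * diagonal v‖ ≤ c * ‖B‖ :=
  frobenius_norm_le_of_forall_norm_apply_le hc fun i j => by
    rw [diagonal_mul_sub_mul_diagonal_apply, norm_mul]
    exact mul_le_mul_of_nonneg_right (hv i j) (norm_nonneg _)

/-- The Frobenius operator norm of `B ↦ H B - B H` is the supremum of this set. -/
def commutatorNormRatios [RCLike 𝕜] (H : Matrix n n 𝕜) : Set ℝ :=
  {r | ∃ B : Matrix n n 𝕜, B ≠ 0 ∧ r = ‖H * B - B * H‖ / ‖B‖}

theorem commutatorNormRatios_conjStarAlgAut [RCLike 𝕜] (u : unitaryGroup n 𝕜)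
    (H : Matrix n n 𝕜) :
    commutatorNormRatios (conjStarAlgAut 𝕜 _ u H) = commutatorNormRatios H := by
  ext r
  simp only [commutatorNormRatios, Set.mem_ofPred_eq]
  rw [(EquivLike.surjective (conjStarAlgAut 𝕜 (Matrix n n 𝕜) u)).exists]
  simp only [← map_mul, ← map_sub, frobenius_norm_conjStarAlgAut, EmbeddingLike.map_ne_zero_iff]

theorem isGreatest_commutatorNormRatios_diagonal [RCLike 𝕜] [Nonempty n] (f : n → ℝ) :
    IsGreatest (commutatorNormRatios (diagonal (RCLike.ofReal ∘ f) : Matrix n n 𝕜))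
      ((⨆ i, f i) - ⨅ i, f i) := by
  obtain ⟨iMax, hiMax⟩ := exists_eq_ciSup_of_finite (f := f)
  obtain ⟨iMin, hiMin⟩ := exists_eq_ciInf_of_finite (f := f)
  have hle : ∀ i j, f i - f j ≤ (⨆ i, f i) - ⨅ i, f i := fun i j =>
    sub_le_sub (le_ciSup (Finite.bddAbove_range f) i) (ciInf_le (Finite.bddBelow_range f) j)
  have hwidth : 0 ≤ (⨆ i, f i) - ⨅ i, f i := by simpa using hle iMin iMin
  have hsingle : single iMax iMin (1 : 𝕜) ≠ 0 := fun h => by simpa using congr($h iMax iMin)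
  constructor
  · refine ⟨single iMax iMin 1, hsingle, ?_⟩
    rw [diagonal_mul_sub_mul_diagonal_single, norm_smul,
      mul_div_cancel_right₀ _ (norm_ne_zero_iff.2 hsingle), Function.comp_apply,
      Function.comp_apply, ← RCLike.ofReal_sub, RCLike.norm_ofReal, hiMax, hiMin,
      abs_of_nonneg hwidth]
  · rintro r ⟨B, -, rfl⟩
    refine div_le_of_le_mul₀ (norm_nonneg _) hwidth ?_
    refine frobenius_norm_diagonal_mul_sub_mul_diagonal_le _ hwidth (fun i j => ?_) B
    rw [Function.comp_apply, Function.comp_apply, ← RCLike.ofReal_sub, RCLike.norm_ofReal,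
      abs_sub_le_iff]
    exact ⟨hle i j, hle j i⟩

theorem IsHermitian.isGreatest_commutatorNormRatios [RCLike 𝕜] [Nonempty n]
    {H : Matrix n n 𝕜} (hH : H.IsHermitian) :
    IsGreatest (commutatorNormRatios H) ((⨆ i, hH.eigenvalues i) - ⨅ i, hH.eigenvalues i) := by
  have h := isGreatest_commutatorNormRatios_diagonal (𝕜 := 𝕜) hH.eigenvalues
  rwa [← commutatorNormRatios_conjStarAlgAut hH.eigenvectorUnitary, ← hH.spectral_theorem] at h

end Matrix

theorem frobNorm_eq_norm {d : ℕ} (A : Matrix (Fin d) (Fin d) ℂ) : frobNorm A = ‖A‖ := by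
  rw [frobNorm, ← RCLike.re_eq_complex_re, ← frobenius_norm_sq_eq_re_trace,
    Real.sqrt_sq (norm_nonneg A)]

/-- Appendix C of the paper: for a Hermitian matrix `H₀` with
largest eigenvalue `E_max` and smallest eigenvalue `E_min`, the induced 2-norm of the
commutator superoperator `L(A) = −i(H₀A − AH₀)` equals the spectral diameter:
`sup_{A ≠ 0} ‖L(A)‖₂ / ‖A‖₂ = E_max − E_min`. -/
theorem commutator_two_norm (d : ℕ) (hd : 1 ≤ d)
    (H₀ : Matrix (Fin d) (Fin d) ℂ) (hH₀ : H₀.IsHermitian) :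
    sSup {r : ℝ | ∃ A : Matrix (Fin d) (Fin d) ℂ, A ≠ 0 ∧
        r = frobNorm ((-Complex.I) • (H₀ * A - A * H₀)) / frobNorm A}
      = (⨆ i, hH₀.eigenvalues i) - (⨅ i, hH₀.eigenvalues i) := by
  have : Nonempty (Fin d) := Fin.pos_iff_nonempty.1 hd
  simp_rw [frobNorm_eq_norm, norm_smul, norm_neg, Complex.norm_I, one_mul]
  exact hH₀.isGreatest_commutatorNormRatios.csSup_eq
end
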